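/- Let F be a smooth solution of the associativity (WDVV-type) equations on ℝⁿ, let λ ∈ ℝ, let χ₊ be a smooth solution of the Gauss–Manin equations with parameter λ, and let χ₋ be a smooth solution of the Gauss–Manin equations with parameter −λ. Then G = χ₊ · χ₋ is a symmetry characteristic of the associativity equations at F, i.e. it satisfies their linearization. -/

import Mathlib

set_option linter.unusedSectionVars false
set_option maxHeartbeats 1000000

/-- Partial derivative of `f` in the `i`-th coordinate direction on `ℝⁿ`. -/
noncomputable def pd {n : ℕ} (i : Fin n) (f : (Fin n → ℝ) → ℝ) : (Fin n → ℝ) → ℝ :=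
  fun x => fderiv ℝ f x (Pi.single i 1)

lemma contDiff_pd {n : ℕ} (i : Fin n) {f : (Fin n → ℝ) → ℝ} (hf : ContDiff ℝ (⊤ : ℕ∞) f) :
    ContDiff ℝ (⊤ : ℕ∞) (pd i f) := by
  have h1 : ContDiff ℝ (⊤ : ℕ∞) (fderiv ℝ f) := hf.fderiv_right (by simp)
  exact (ContinuousLinearMap.apply ℝ ℝ (Pi.single i 1 : Fin n → ℝ)).contDiff.comp h1

lemma pd_comm {n : ℕ} (i j : Fin n) {f : (Fin n → ℝ) → ℝ} (hf : ContDiff ℝ (⊤ : ℕ∞) f)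
    (x : Fin n → ℝ) : pd i (pd j f) x = pd j (pd i f) x := by
  have hsym : IsSymmSndFDerivAt ℝ f x :=
    hf.contDiffAt.isSymmSndFDerivAt (by rw [minSmoothness_of_isRCLikeNormedField]; exact WithTop.coe_le_coe.mpr (le_top : (2 : ℕ∞) ≤ ⊤))
  have hd : DifferentiableAt ℝ (fderiv ℝ f) x :=
    ((hf.fderiv_right (m := (⊤ : ℕ∞)) (by simp)).differentiable (by simp)) x
  have key : ∀ v w : Fin n → ℝ,
      fderiv ℝ (fun y => fderiv ℝ f y v) x w = fderiv ℝ (fderiv ℝ f) x w v := by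
    intro v w
    have h : (fun y => fderiv ℝ f y v)
        = fun y => (fderiv ℝ f y) ((fun _ => v) y) := rfl
    rw [h, fderiv_clm_apply hd (differentiableAt_const _)]
    simp
  show fderiv ℝ (fun y => fderiv ℝ f y (Pi.single j 1)) x (Pi.single i 1)
      = fderiv ℝ (fun y => fderiv ℝ f y (Pi.single i 1)) x (Pi.single j 1)
  rw [key, key]
  exact (hsym _ _).symm

lemma pd_mul {n : ℕ} (i : Fin n) {f g : (Fin n → ℝ) → ℝ} (x : Fin n → ℝ)
    (hf : DifferentiableAt ℝ f x) (hg : DifferentiableAt ℝ g x) :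
    pd i (fun y => f y * g y) x = pd i f x * g x + f x * pd i g x := by
  unfold pd
  rw [fderiv_fun_mul hf hg]
  simp
  ring

lemma pd_const_mul {n : ℕ} (i : Fin n) (c : ℝ) {f : (Fin n → ℝ) → ℝ} (x : Fin n → ℝ)
    (hf : DifferentiableAt ℝ f x) :
    pd i (fun y => c * f y) x = c * pd i f x := by
  unfold pd
  rw [fderiv_const_mul hf]
  simp

lemma pd_sum {n : ℕ} (i : Fin n) {ι : Type*} (s : Finset ι)
    {f : ι → (Fin n → ℝ) → ℝ} (x : Fin n → ℝ)
    (hf : ∀ j ∈ s, DifferentiableAt ℝ (f j) x) :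
    pd i (fun y => ∑ j ∈ s, f j y) x = ∑ j ∈ s, pd i (f j) x := by
  unfold pd
  rw [fderiv_fun_sum hf]
  simp

lemma pd_add {n : ℕ} (i : Fin n) {f g : (Fin n → ℝ) → ℝ} (x : Fin n → ℝ)
    (hf : DifferentiableAt ℝ f x) (hg : DifferentiableAt ℝ g x) :
    pd i (fun y => f y + g y) x = pd i f x + pd i g x := by
  unfold pd
  rw [fderiv_fun_add hf hg]
  simp

lemma pd_mul_const {n : ℕ} (i : Fin n) {f : (Fin n → ℝ) → ℝ} (x : Fin n → ℝ)
    (hf : DifferentiableAt ℝ f x) (k : ℝ) :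
    pd i (fun y => f y * k) x = pd i f x * k := by
  unfold pd
  rw [fderiv_mul_const hf]
  simp [mul_comm]

lemma cd_dAt {n : ℕ} {f : (Fin n → ℝ) → ℝ} (hf : ContDiff ℝ (⊤ : ℕ∞) f) (x : Fin n → ℝ) :
    DifferentiableAt ℝ f x := (hf.differentiable (by simp)).differentiableAt

lemma GM3 {n : ℕ} {η : Matrix (Fin n) (Fin n) ℝ} {F χ : (Fin n → ℝ) → ℝ} {lam : ℝ}
    (hF : ContDiff ℝ (⊤ : ℕ∞) F) (hχ : ContDiff ℝ (⊤ : ℕ∞) χ)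
    (hGM : ∀ i j : Fin n, ∀ x : Fin n → ℝ,
      pd i (pd j χ) x = lam * ∑ p, ∑ q, η p q * pd i (pd j (pd p F)) x * pd q χ x)
    (α β δ : Fin n) (x : Fin n → ℝ) :
    pd α (pd β (pd δ χ)) x
      = lam * ∑ p, ∑ q, (η p q * pd α (pd β (pd δ (pd p F))) x * pd q χ x
          + η p q * pd β (pd δ (pd p F)) x
            * (lam * ∑ s, ∑ t, η s t * pd α (pd q (pd s F)) x * pd t χ x)) := by
  have hc3 : ∀ p : Fin n, ContDiff ℝ (⊤ : ℕ∞) (pd β (pd δ (pd p F))) :=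
    fun p => contDiff_pd β (contDiff_pd δ (contDiff_pd p hF))
  have hin : ∀ p q : Fin n,
      ContDiff ℝ (⊤ : ℕ∞) (fun y => η p q * pd β (pd δ (pd p F)) y * pd q χ y) :=
    fun p q => (contDiff_const.mul (hc3 p)).mul (contDiff_pd q hχ)
  have hfun : pd β (pd δ χ)
      = fun y => lam * ∑ p, ∑ q, η p q * pd β (pd δ (pd p F)) y * pd q χ y :=
    funext fun y => hGM β δ y
  have step_in : ∀ p q : Fin n,
      pd α (fun y => η p q * pd β (pd δ (pd p F)) y * pd q χ y) x
        = η p q * pd α (pd β (pd δ (pd p F))) x * pd q χ x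
          + η p q * pd β (pd δ (pd p F)) x
            * (lam * ∑ s, ∑ t, η s t * pd α (pd q (pd s F)) x * pd t χ x) := by
    intro p q
    rw [pd_mul α x (cd_dAt (contDiff_const.mul (hc3 p)) x) (cd_dAt (contDiff_pd q hχ) x),
      pd_const_mul α (η p q) x (cd_dAt (hc3 p) x), hGM α q x]
  have step_q : ∀ p : Fin n,
      pd α (fun y => ∑ q, η p q * pd β (pd δ (pd p F)) y * pd q χ y) x
        = ∑ q, (η p q * pd α (pd β (pd δ (pd p F))) x * pd q χ x
          + η p q * pd β (pd δ (pd p F)) x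
            * (lam * ∑ s, ∑ t, η s t * pd α (pd q (pd s F)) x * pd t χ x)) := by
    intro p
    rw [pd_sum α Finset.univ x (fun q _ => cd_dAt (hin p q) x)]
    exact Finset.sum_congr rfl fun q _ => step_in p q
  have hq : ∀ p : Fin n, ContDiff ℝ (⊤ : ℕ∞)
      (fun y => ∑ q, η p q * pd β (pd δ (pd p F)) y * pd q χ y) :=
    fun p => ContDiff.sum fun q _ => hin p q
  have step_p :
      pd α (fun y => ∑ p, ∑ q, η p q * pd β (pd δ (pd p F)) y * pd q χ y) x
        = ∑ p, ∑ q, (η p q * pd α (pd β (pd δ (pd p F))) x * pd q χ x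
          + η p q * pd β (pd δ (pd p F)) x
            * (lam * ∑ s, ∑ t, η s t * pd α (pd q (pd s F)) x * pd t χ x)) := by
    rw [pd_sum α Finset.univ x (fun p _ => cd_dAt (hq p) x)]
    exact Finset.sum_congr rfl fun p _ => step_q p
  rw [hfun, pd_const_mul α lam x (cd_dAt (ContDiff.sum fun p _ => hq p) x), step_p]

lemma D3_mul {n : ℕ} {f g : (Fin n → ℝ) → ℝ} (hf : ContDiff ℝ (⊤ : ℕ∞) f) (hg : ContDiff ℝ (⊤ : ℕ∞) g)
    (α β δ : Fin n) (x : Fin n → ℝ) :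
    pd α (pd β (pd δ (fun y => f y * g y))) x
      = pd α (pd β (pd δ f)) x * g x + pd β (pd δ f) x * pd α g x
        + pd α (pd δ f) x * pd β g x + pd δ f x * pd α (pd β g) x
        + pd α (pd β f) x * pd δ g x + pd β f x * pd α (pd δ g) x
        + pd α f x * pd β (pd δ g) x + f x * pd α (pd β (pd δ g)) x := by
  have c1 : ContDiff ℝ (⊤ : ℕ∞) (fun y => pd δ f y * g y) := (contDiff_pd δ hf).mul hg
  have c2 : ContDiff ℝ (⊤ : ℕ∞) (fun y => f y * pd δ g y) := hf.mul (contDiff_pd δ hg)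
  have cP : ContDiff ℝ (⊤ : ℕ∞) (fun y => pd β (pd δ f) y * g y + pd δ f y * pd β g y) :=
    ((contDiff_pd β (contDiff_pd δ hf)).mul hg).add
      ((contDiff_pd δ hf).mul (contDiff_pd β hg))
  have cQ : ContDiff ℝ (⊤ : ℕ∞) (fun y => pd β f y * pd δ g y + f y * pd β (pd δ g) y) :=
    ((contDiff_pd β hf).mul (contDiff_pd δ hg)).add
      (hf.mul (contDiff_pd β (contDiff_pd δ hg)))
  have h1 : pd δ (fun y => f y * g y) = fun y => pd δ f y * g y + f y * pd δ g y :=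
    funext fun y => pd_mul δ y (cd_dAt hf y) (cd_dAt hg y)
  have h2 : pd β (pd δ (fun y => f y * g y)) = fun y =>
      (pd β (pd δ f) y * g y + pd δ f y * pd β g y)
        + (pd β f y * pd δ g y + f y * pd β (pd δ g) y) := by
    funext y
    rw [h1, pd_add β y (cd_dAt c1 y) (cd_dAt c2 y),
      pd_mul β y (cd_dAt (contDiff_pd δ hf) y) (cd_dAt hg y),
      pd_mul β y (cd_dAt hf y) (cd_dAt (contDiff_pd δ hg) y)]
  rw [h2, pd_add α x (cd_dAt cP x) (cd_dAt cQ x),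
    pd_add α x (cd_dAt ((contDiff_pd β (contDiff_pd δ hf)).mul hg) x)
      (cd_dAt ((contDiff_pd δ hf).mul (contDiff_pd β hg)) x),
    pd_add α x (cd_dAt ((contDiff_pd β hf).mul (contDiff_pd δ hg)) x)
      (cd_dAt (hf.mul (contDiff_pd β (contDiff_pd δ hg))) x),
    pd_mul α x (cd_dAt (contDiff_pd β (contDiff_pd δ hf)) x) (cd_dAt hg x),
    pd_mul α x (cd_dAt (contDiff_pd δ hf) x) (cd_dAt (contDiff_pd β hg) x),
    pd_mul α x (cd_dAt (contDiff_pd β hf) x) (cd_dAt (contDiff_pd δ hg) x),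
    pd_mul α x (cd_dAt hf x) (cd_dAt (contDiff_pd β (contDiff_pd δ hg)) x)]
  ring

lemma c_move {n : ℕ} {F : (Fin n → ℝ) → ℝ} (hF : ContDiff ℝ (⊤ : ℕ∞) F)
    (s i j k : Fin n) (x : Fin n → ℝ) :
    pd s (pd i (pd j (pd k F))) x = pd i (pd j (pd k (pd s F))) x := by
  have h2 : pd s (pd k F) = pd k (pd s F) := funext fun y => pd_comm s k hF y
  have h1 : pd s (pd j (pd k F)) = pd j (pd k (pd s F)) := by
    have := funext fun y => pd_comm s j (contDiff_pd k hF) y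
    rw [this, h2]
  calc pd s (pd i (pd j (pd k F))) x
      = pd i (pd s (pd j (pd k F))) x :=
        pd_comm s i (contDiff_pd j (contDiff_pd k hF)) x
    _ = pd i (pd j (pd k (pd s F))) x := by rw [h1]


open Finset

variable {n : ℕ}

lemma sum_swap_blocks (f : Fin n → Fin n → Fin n → Fin n → ℝ) :
    ∑ δ, ∑ γ, ∑ p, ∑ q, f δ γ p q = ∑ p, ∑ q, ∑ δ, ∑ γ, f δ γ p q := by
  calc ∑ δ, ∑ γ, ∑ p, ∑ q, f δ γ p q
      = ∑ δ, ∑ p, ∑ γ, ∑ q, f δ γ p q :=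
        Finset.sum_congr rfl fun δ _ => Finset.sum_comm
    _ = ∑ δ, ∑ p, ∑ q, ∑ γ, f δ γ p q :=
        Finset.sum_congr rfl fun δ _ => Finset.sum_congr rfl fun p _ =>
          Finset.sum_comm
    _ = ∑ p, ∑ δ, ∑ q, ∑ γ, f δ γ p q := Finset.sum_comm
    _ = ∑ p, ∑ q, ∑ δ, ∑ γ, f δ γ p q :=
        Finset.sum_congr rfl fun p _ => Finset.sum_comm

lemma sum2_congr {f g : Fin n → Fin n → ℝ} (h : ∀ i j, f i j = g i j) :
    ∑ i, ∑ j, f i j = ∑ i, ∑ j, g i j :=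
  Finset.sum_congr rfl fun i _ => Finset.sum_congr rfl fun j _ => h i j

lemma sum4_congr {f g : Fin n → Fin n → Fin n → Fin n → ℝ}
    (h : ∀ i j k l, f i j k l = g i j k l) :
    ∑ i, ∑ j, ∑ k, ∑ l, f i j k l = ∑ i, ∑ j, ∑ k, ∑ l, g i j k l :=
  Finset.sum_congr rfl fun i _ => Finset.sum_congr rfl fun j _ =>
    Finset.sum_congr rfl fun k _ => Finset.sum_congr rfl fun l _ => h i j k l

/-- `Q` tensor. -/
def QQ (M : Fin n → Fin n → ℝ) (c : Fin n → Fin n → Fin n → ℝ) (α β ν ρ : Fin n) : ℝ :=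
  ∑ δ, ∑ γ, c α β δ * M δ γ * c γ ν ρ

section Qsym

variable {M : Fin n → Fin n → ℝ} {c : Fin n → Fin n → Fin n → ℝ}
  (hM : ∀ i j, M i j = M j i)
  (hc1 : ∀ i j k, c i j k = c j i k)
  (hc2 : ∀ i j k, c i j k = c i k j)
  (hW : ∀ α β ν ρ, ∑ δ, ∑ γ, c α β δ * M δ γ * c γ ν ρ
      = ∑ δ, ∑ γ, c α ν δ * M δ γ * c γ β ρ)

-- any permutation of the three arguments of c
include hc1 hc2 in
lemma c_perm3 (i j k : Fin n) :
    c i j k = c j i k ∧ c i j k = c i k j ∧ c i j k = c k j i ∧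
    c i j k = c j k i ∧ c i j k = c k i j := by
  refine ⟨hc1 i j k, hc2 i j k, ?_, ?_, ?_⟩
  · rw [hc1, hc2, hc1]
  · rw [hc1, hc2]
  · rw [hc2, hc1]

include hc1 in
lemma QQ_12 (α β ν ρ : Fin n) : QQ M c α β ν ρ = QQ M c β α ν ρ :=
  sum2_congr fun δ γ => by rw [hc1 α β δ]

include hc2 in
lemma QQ_34 (α β ν ρ : Fin n) : QQ M c α β ν ρ = QQ M c α β ρ ν :=
  sum2_congr fun δ γ => by rw [hc2 γ ν ρ]

include hW in
lemma QQ_23 (α β ν ρ : Fin n) : QQ M c α β ν ρ = QQ M c α ν β ρ := hW α β ν ρ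

include hM hc1 hc2 in
lemma QQ_pair (α β ν ρ : Fin n) : QQ M c α β ν ρ = QQ M c ν ρ α β := by
  unfold QQ
  rw [Finset.sum_comm]
  refine sum2_congr fun δ γ => ?_
  have h1 : c α β γ = c γ α β := by rw [hc1, hc2, hc1, hc2]
  have h2 : c δ ν ρ = c ν ρ δ := by rw [hc1, hc2, hc1, hc2]
  rw [hM γ δ, h1, h2]; ring

include hM hc1 hc2 hW in
lemma QQ_13 (α β ν ρ : Fin n) : QQ M c α β ν ρ = QQ M c ν β α ρ := by
  rw [QQ_12 hc1, QQ_23 hW, QQ_12 hc1]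

include hM hc1 hc2 hW in
lemma QQ_24 (α β ν ρ : Fin n) : QQ M c α β ν ρ = QQ M c α ρ ν β := by
  rw [QQ_34 hc2, QQ_23 hW, QQ_34 hc2]

end Qsym

section PR

variable {M : Fin n → Fin n → ℝ} {c : Fin n → Fin n → Fin n → ℝ}
  (hM : ∀ i j, M i j = M j i)
  (hc1 : ∀ i j k, c i j k = c j i k)
  (hc2 : ∀ i j k, c i j k = c i k j)
  (hW : ∀ α β ν ρ, ∑ δ, ∑ γ, c α β δ * M δ γ * c γ ν ρ
      = ∑ δ, ∑ γ, c α ν δ * M δ γ * c γ β ρ)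

/-- contraction `P`. -/
def PP (M : Fin n → Fin n → ℝ) (c : Fin n → Fin n → Fin n → ℝ) (x y z u v : Fin n) : ℝ :=
  ∑ p, ∑ q, M p q * c x y p * QQ M c q z u v

/-- contraction `R`. -/
def RR (M : Fin n → Fin n → ℝ) (c : Fin n → Fin n → Fin n → ℝ) (x y z u v : Fin n) : ℝ :=
  ∑ δ, ∑ γ, QQ M c x y z δ * M δ γ * c γ u v

lemma PP_eq_RR (x y z u v : Fin n) : PP M c x y z u v = RR M c x y z u v := by
  calc PP M c x y z u v
      = ∑ p, ∑ q, ∑ δ, ∑ γ, M p q * c x y p * (c q z δ * M δ γ * c γ u v) := by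
        unfold PP QQ
        simp only [Finset.mul_sum]
    _ = ∑ δ, ∑ γ, ∑ p, ∑ q, M p q * c x y p * (c q z δ * M δ γ * c γ u v) :=
        sum_swap_blocks _
    _ = RR M c x y z u v := by
        unfold RR QQ
        refine sum2_congr fun δ γ => ?_
        simp only [Finset.sum_mul]
        exact sum2_congr fun p q => by ring

include hM hc1 hc2 hW in
lemma RR_13 (x y z u v : Fin n) : RR M c x y z u v = RR M c z y x u v := by
  unfold RR
  exact sum2_congr fun δ γ => by rw [QQ_13 hM hc1 hc2 hW]

include hM hc1 hc2 hW in
lemma PP_35 (x y z u v : Fin n) : PP M c x y z u v = PP M c x y v u z := by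
  unfold PP
  exact sum2_congr fun p q => by rw [QQ_24 hM hc1 hc2 hW]

include hM hc1 hc2 hW in
lemma PP_15 (x y z u v : Fin n) : PP M c x y z u v = PP M c v y z u x := by
  rw [PP_eq_RR, RR_13 hM hc1 hc2 hW, ← PP_eq_RR, PP_35 hM hc1 hc2 hW,
    PP_eq_RR, RR_13 hM hc1 hc2 hW, ← PP_eq_RR]

end PR

section S1sec

variable {M : Fin n → Fin n → ℝ} {c : Fin n → Fin n → Fin n → ℝ}
  {d : Fin n → Fin n → Fin n → Fin n → ℝ} {u : Fin n → ℝ} {lam : ℝ}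

lemma S1 (hdW : ∀ s α β ν ρ, ∑ δ, ∑ γ,
      (d α β δ s * M δ γ * c γ ν ρ + c α β δ * M δ γ * d γ ν ρ s)
    = ∑ δ, ∑ γ, (d α ν δ s * M δ γ * c γ β ρ + c α ν δ * M δ γ * d γ β ρ s))
    (α β ν ρ : Fin n) :
    (∑ δ, ∑ γ, (lam * ∑ s, ∑ t, M s t * d α β δ s * u t) * M δ γ * c γ ν ρ)
      + ∑ δ, ∑ γ, c α β δ * M δ γ * (lam * ∑ s, ∑ t, M s t * d γ ν ρ s * u t)
    = (∑ δ, ∑ γ, (lam * ∑ s, ∑ t, M s t * d α ν δ s * u t) * M δ γ * c γ β ρ)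
      + ∑ δ, ∑ γ, c α ν δ * M δ γ * (lam * ∑ s, ∑ t, M s t * d γ β ρ s * u t) := by
  have red : ∀ β ν,
      (∑ δ, ∑ γ, (lam * ∑ s, ∑ t, M s t * d α β δ s * u t) * M δ γ * c γ ν ρ)
        + (∑ δ, ∑ γ, c α β δ * M δ γ * (lam * ∑ s, ∑ t, M s t * d γ ν ρ s * u t))
      = ∑ s, ∑ t, lam * (M s t * u t) *
          (∑ δ, ∑ γ, (d α β δ s * M δ γ * c γ ν ρ + c α β δ * M δ γ * d γ ν ρ s)) := by
    intro β ν
    calc (∑ δ, ∑ γ, (lam * ∑ s, ∑ t, M s t * d α β δ s * u t) * M δ γ * c γ ν ρ)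
          + (∑ δ, ∑ γ, c α β δ * M δ γ * (lam * ∑ s, ∑ t, M s t * d γ ν ρ s * u t))
        = ∑ δ, ∑ γ, ∑ s, ∑ t, lam * (M s t * u t) *
            (d α β δ s * M δ γ * c γ ν ρ + c α β δ * M δ γ * d γ ν ρ s) := by
          simp only [← Finset.sum_add_distrib]
          refine sum2_congr fun δ γ => ?_
          simp only [Finset.mul_sum, Finset.sum_mul, ← Finset.sum_add_distrib]
          exact sum2_congr fun s t => by ring
      _ = ∑ s, ∑ t, ∑ δ, ∑ γ, lam * (M s t * u t) *
            (d α β δ s * M δ γ * c γ ν ρ + c α β δ * M δ γ * d γ ν ρ s) :=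
          sum_swap_blocks _
      _ = ∑ s, ∑ t, lam * (M s t * u t) *
            (∑ δ, ∑ γ, (d α β δ s * M δ γ * c γ ν ρ + c α β δ * M δ γ * d γ ν ρ s)) := by
          refine sum2_congr fun s t => ?_
          simp only [Finset.mul_sum]
  rw [red β ν, red ν β]
  exact sum2_congr fun s t => by rw [hdW s α β ν ρ]

end S1sec

section S3sec

variable {M : Fin n → Fin n → ℝ} {c : Fin n → Fin n → Fin n → ℝ}
  {w : Fin n → Fin n → ℝ} {lam : ℝ}

lemma S3 (hM : ∀ i j, M i j = M j i)
    (hc1 : ∀ i j k, c i j k = c j i k)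
    (hc2 : ∀ i j k, c i j k = c i k j)
    (hW : ∀ α β ν ρ, ∑ δ, ∑ γ, c α β δ * M δ γ * c γ ν ρ
      = ∑ δ, ∑ γ, c α ν δ * M δ γ * c γ β ρ)
    (hw : ∀ i j, w i j = -(w j i))
    (α β ν ρ : Fin n) :
    (∑ δ, ∑ γ, (lam * ∑ s, ∑ t, M s t *
        (c β δ s * w t α + c α δ s * w t β + c α β s * w t δ)) * M δ γ * c γ ν ρ)
      + ∑ δ, ∑ γ, c α β δ * M δ γ * (lam * ∑ s, ∑ t, M s t *
        (c ν ρ s * w t γ + c γ ρ s * w t ν + c γ ν s * w t ρ))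
    = (∑ δ, ∑ γ, (lam * ∑ s, ∑ t, M s t *
        (c ν δ s * w t α + c α δ s * w t ν + c α ν s * w t δ)) * M δ γ * c γ β ρ)
      + ∑ δ, ∑ γ, c α ν δ * M δ γ * (lam * ∑ s, ∑ t, M s t *
        (c β ρ s * w t γ + c γ ρ s * w t β + c γ β s * w t ρ)) := by
  have h5 : ∀ i j k, c i j k = c k i j := fun i j k =>
    (c_perm3 hc1 hc2 i j k).2.2.2.2
  have expand : ∀ β ν,
      (∑ δ, ∑ γ, (lam * ∑ s, ∑ t, M s t *
          (c β δ s * w t α + c α δ s * w t β + c α β s * w t δ)) * M δ γ * c γ ν ρ)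
        + (∑ δ, ∑ γ, c α β δ * M δ γ * (lam * ∑ s, ∑ t, M s t *
          (c ν ρ s * w t γ + c γ ρ s * w t ν + c γ ν s * w t ρ)))
      = ((∑ s, ∑ t, lam * M s t * w t α * QQ M c s β ν ρ)
        + (∑ s, ∑ t, lam * M s t * w t β * QQ M c s α ν ρ)
        + (∑ s, ∑ t, lam * M s t * w t ν * QQ M c α β ρ s)
        + (∑ s, ∑ t, lam * M s t * w t ρ * QQ M c α β ν s))
        + ((∑ s, ∑ t, ∑ δ, ∑ γ, lam * M s t * (c s α β * (w t δ * M δ γ * c γ ν ρ)))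
          + (∑ s, ∑ t, ∑ δ, ∑ γ, lam * M s t * (c s ν ρ * (c α β δ * M δ γ * w t γ)))) := by
    intro β ν
    have step1 :
        (∑ δ, ∑ γ, (lam * ∑ s, ∑ t, M s t *
            (c β δ s * w t α + c α δ s * w t β + c α β s * w t δ)) * M δ γ * c γ ν ρ)
          + (∑ δ, ∑ γ, c α β δ * M δ γ * (lam * ∑ s, ∑ t, M s t *
            (c ν ρ s * w t γ + c γ ρ s * w t ν + c γ ν s * w t ρ)))
        = ∑ δ, ∑ γ, ∑ s, ∑ t,
            (lam * M s t * (c s β δ * M δ γ * c γ ν ρ) * w t α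
            + lam * M s t * (c s α δ * M δ γ * c γ ν ρ) * w t β
            + lam * M s t * (c α β δ * M δ γ * c γ ρ s) * w t ν
            + lam * M s t * (c α β δ * M δ γ * c γ ν s) * w t ρ
            + (lam * M s t * (c s α β * (w t δ * M δ γ * c γ ν ρ))
              + lam * M s t * (c s ν ρ * (c α β δ * M δ γ * w t γ)))) := by
      simp only [← Finset.sum_add_distrib]
      refine sum2_congr fun δ γ => ?_
      simp only [Finset.mul_sum, Finset.sum_mul, ← Finset.sum_add_distrib]
      refine sum2_congr fun s t => ?_
      rw [h5 β δ s, h5 α δ s, h5 α β s, h5 ν ρ s]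
      ring
    rw [step1, sum_swap_blocks]
    simp only [QQ, Finset.mul_sum, Finset.sum_mul, ← Finset.sum_add_distrib]
    exact sum4_congr fun s t δ γ => by ring
  have Ezero : ∀ β ν,
      (∑ s, ∑ t, ∑ δ, ∑ γ, lam * M s t * (c s α β * (w t δ * M δ γ * c γ ν ρ)))
        + (∑ s, ∑ t, ∑ δ, ∑ γ, lam * M s t * (c s ν ρ * (c α β δ * M δ γ * w t γ))) = 0 := by
    intro β ν
    have h2 : (∑ s, ∑ t, ∑ δ, ∑ γ, lam * M s t * (c s ν ρ * (c α β δ * M δ γ * w t γ)))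
        = -(∑ s, ∑ t, ∑ δ, ∑ γ, lam * M s t * (c s α β * (w t δ * M δ γ * c γ ν ρ))) := by
      calc (∑ s, ∑ t, ∑ δ, ∑ γ, lam * M s t * (c s ν ρ * (c α β δ * M δ γ * w t γ)))
          = ∑ s, ∑ t, ∑ δ, ∑ γ, lam * M δ γ * (c δ ν ρ * (c α β s * M s t * w γ t)) :=
            sum_swap_blocks _
        _ = ∑ s, ∑ t, ∑ δ, ∑ γ, -(lam * M s t * (c s α β * (w t δ * M δ γ * c γ ν ρ))) := by
            refine sum2_congr fun s t => ?_
            rw [Finset.sum_comm]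
            refine sum2_congr fun δ γ => ?_
            rw [hM γ δ, hw δ t, h5 α β s]
            ring
        _ = -(∑ s, ∑ t, ∑ δ, ∑ γ, lam * M s t * (c s α β * (w t δ * M δ γ * c γ ν ρ))) := by
            simp only [← Finset.sum_neg_distrib]
    rw [h2]; ring
  rw [expand β ν, expand ν β, Ezero β ν, Ezero ν β]
  have E1 : ∀ s : Fin n, QQ M c s β ν ρ = QQ M c s ν β ρ := fun s => QQ_23 hW s β ν ρ
  have E2 : ∀ s : Fin n, QQ M c s α ν ρ = QQ M c α ν ρ s := fun s => by
    rw [QQ_12 hc1, QQ_23 hW, QQ_34 hc2]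
  have E3 : ∀ s : Fin n, QQ M c α β ρ s = QQ M c s α β ρ := fun s => by
    rw [QQ_34 hc2, QQ_23 hW, QQ_12 hc1]
  have E4 : QQ M c α β ν = QQ M c α ν β := funext fun s => QQ_23 hW α β ν s
  simp only [E1, E2, E3, E4]
  ring

end S3sec

section S2sec

variable {M : Fin n → Fin n → ℝ} {c : Fin n → Fin n → Fin n → ℝ}
  {v : Fin n → ℝ} {lam : ℝ}

lemma S2 (hM : ∀ i j, M i j = M j i)
    (hc1 : ∀ i j k, c i j k = c j i k)
    (hc2 : ∀ i j k, c i j k = c i k j)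
    (hW : ∀ α β ν ρ, ∑ δ, ∑ γ, c α β δ * M δ γ * c γ ν ρ
      = ∑ δ, ∑ γ, c α ν δ * M δ γ * c γ β ρ)
    (α β ν ρ : Fin n) :
    (∑ δ, ∑ γ, (lam ^ 2 * ∑ p, ∑ q, ∑ s, ∑ t,
        M p q * M s t * c β δ p * c α q s * v t) * M δ γ * c γ ν ρ)
      + ∑ δ, ∑ γ, c α β δ * M δ γ * (lam ^ 2 * ∑ p, ∑ q, ∑ s, ∑ t,
        M p q * M s t * c ν ρ p * c γ q s * v t)
    = (∑ δ, ∑ γ, (lam ^ 2 * ∑ p, ∑ q, ∑ s, ∑ t,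
        M p q * M s t * c ν δ p * c α q s * v t) * M δ γ * c γ β ρ)
      + ∑ δ, ∑ γ, c α ν δ * M δ γ * (lam ^ 2 * ∑ p, ∑ q, ∑ s, ∑ t,
        M p q * M s t * c β ρ p * c γ q s * v t) := by
  have red : ∀ β ν,
      (∑ δ, ∑ γ, (lam ^ 2 * ∑ p, ∑ q, ∑ s, ∑ t,
          M p q * M s t * c β δ p * c α q s * v t) * M δ γ * c γ ν ρ)
        + (∑ δ, ∑ γ, c α β δ * M δ γ * (lam ^ 2 * ∑ p, ∑ q, ∑ s, ∑ t,
          M p q * M s t * c ν ρ p * c γ q s * v t))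
      = ∑ s, ∑ t, lam ^ 2 * (M s t * v t) *
          ((∑ p, ∑ q, M p q * c α q s * QQ M c β p ν ρ)
            + (∑ p, ∑ q, M p q * c ν ρ p * QQ M c α β q s)) := by
    intro β ν
    calc (∑ δ, ∑ γ, (lam ^ 2 * ∑ p, ∑ q, ∑ s, ∑ t,
            M p q * M s t * c β δ p * c α q s * v t) * M δ γ * c γ ν ρ)
          + (∑ δ, ∑ γ, c α β δ * M δ γ * (lam ^ 2 * ∑ p, ∑ q, ∑ s, ∑ t,
            M p q * M s t * c ν ρ p * c γ q s * v t))
        = ∑ δ, ∑ γ, ∑ p, ∑ q, ∑ s, ∑ t, lam ^ 2 * (M s t * v t) *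
            (M p q * c α q s * (c β p δ * M δ γ * c γ ν ρ)
              + M p q * c ν ρ p * (c α β δ * M δ γ * c γ q s)) := by
          simp only [← Finset.sum_add_distrib]
          refine sum2_congr fun δ γ => ?_
          simp only [Finset.mul_sum, Finset.sum_mul, ← Finset.sum_add_distrib]
          refine sum4_congr fun p q s t => ?_
          rw [hc2 β δ p]
          ring
      _ = ∑ p, ∑ q, ∑ δ, ∑ γ, ∑ s, ∑ t, lam ^ 2 * (M s t * v t) *
            (M p q * c α q s * (c β p δ * M δ γ * c γ ν ρ)
              + M p q * c ν ρ p * (c α β δ * M δ γ * c γ q s)) :=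
          sum_swap_blocks _
      _ = ∑ p, ∑ q, ∑ s, ∑ t, ∑ δ, ∑ γ, lam ^ 2 * (M s t * v t) *
            (M p q * c α q s * (c β p δ * M δ γ * c γ ν ρ)
              + M p q * c ν ρ p * (c α β δ * M δ γ * c γ q s)) :=
          sum2_congr fun p q => sum_swap_blocks _
      _ = ∑ s, ∑ t, ∑ p, ∑ q, ∑ δ, ∑ γ, lam ^ 2 * (M s t * v t) *
            (M p q * c α q s * (c β p δ * M δ γ * c γ ν ρ)
              + M p q * c ν ρ p * (c α β δ * M δ γ * c γ q s)) :=
          sum_swap_blocks _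
      _ = ∑ s, ∑ t, lam ^ 2 * (M s t * v t) *
            ((∑ p, ∑ q, M p q * c α q s * QQ M c β p ν ρ)
              + (∑ p, ∑ q, M p q * c ν ρ p * QQ M c α β q s)) := by
          refine sum2_congr fun s t => ?_
          simp only [QQ, mul_add, Finset.mul_sum, Finset.sum_mul,
            ← Finset.sum_add_distrib]
  have key2 : ∀ s : Fin n,
      (∑ p, ∑ q, M p q * c ν ρ p * QQ M c α β q s)
        = ∑ p, ∑ q, M p q * c β ρ p * QQ M c α ν q s := by
    intro s
    have eA : ∀ q : Fin n, QQ M c α β q s = QQ M c q s α β :=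
      fun q => QQ_pair hM hc1 hc2 α β q s
    have eB : ∀ q : Fin n, QQ M c q s α ν = QQ M c α ν q s :=
      fun q => QQ_pair hM hc1 hc2 q s α ν
    calc (∑ p, ∑ q, M p q * c ν ρ p * QQ M c α β q s)
        = PP M c ν ρ s α β := by simp only [eA]; rfl
      _ = PP M c β ρ s α ν := PP_15 hM hc1 hc2 hW ν ρ s α β
      _ = ∑ p, ∑ q, M p q * c β ρ p * QQ M c α ν q s := by
          simp only [PP, eB]
  have key1 : ∀ p : Fin n, QQ M c β p ν ρ = QQ M c ν p β ρ :=
    fun p => QQ_13 hM hc1 hc2 hW β p ν ρ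
  rw [red β ν, red ν β]
  refine sum2_congr fun s t => ?_
  rw [key2 s]
  simp only [key1]

end S2sec

section Tsplitsec

variable {M : Fin n → Fin n → ℝ} {c : Fin n → Fin n → Fin n → ℝ}
  {dd : Fin n → Fin n → Fin n → Fin n → ℝ} {a b : Fin n → ℝ} {A B lam : ℝ}

lemma Tsplit (M : Fin n → Fin n → ℝ) (c : Fin n → Fin n → Fin n → ℝ)
    (dd : Fin n → Fin n → Fin n → Fin n → ℝ) (a b : Fin n → ℝ) (A B lam : ℝ)
    (α β δ : Fin n) :
    (lam * ∑ p, ∑ q, (M p q * dd α β δ p * a q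
        + M p q * c β δ p * (lam * ∑ s, ∑ t, M s t * c α q s * a t))) * B
      + (lam * ∑ p, ∑ q, M p q * c β δ p * a q) * b α
      + (lam * ∑ p, ∑ q, M p q * c α δ p * a q) * b β
      + a δ * (-lam * ∑ p, ∑ q, M p q * c α β p * b q)
      + (lam * ∑ p, ∑ q, M p q * c α β p * a q) * b δ
      + a β * (-lam * ∑ p, ∑ q, M p q * c α δ p * b q)
      + a α * (-lam * ∑ p, ∑ q, M p q * c β δ p * b q)
      + A * (-lam * ∑ p, ∑ q, (M p q * dd α β δ p * b q
        + M p q * c β δ p * (-lam * ∑ s, ∑ t, M s t * c α q s * b t)))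
    = (lam * ∑ s, ∑ t, M s t * dd α β δ s * (a t * B - A * b t))
      + (lam ^ 2 * ∑ p, ∑ q, ∑ s, ∑ t,
          M p q * M s t * c β δ p * c α q s * (a t * B + A * b t))
      + (lam * ∑ s, ∑ t, M s t * (c β δ s * (a t * b α - a α * b t)
          + c α δ s * (a t * b β - a β * b t) + c α β s * (a t * b δ - a δ * b t))) := by
  have h1 : (lam * ∑ p, ∑ q, (M p q * dd α β δ p * a q
        + M p q * c β δ p * (lam * ∑ s, ∑ t, M s t * c α q s * a t))) * B
      = (∑ p, ∑ q, lam * (M p q * dd α β δ p * a q) * B)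
        + ∑ p, ∑ q, ∑ s, ∑ t, lam * lam * (M p q * M s t * c β δ p * c α q s * a t) * B := by
    simp only [Finset.mul_sum, Finset.sum_mul, mul_add, add_mul, Finset.sum_add_distrib]
    refine congrArg₂ (· + ·) ?_ ?_
    · exact sum2_congr fun p q => by ring1
    · exact sum4_congr fun p q s t => by ring1
  have h8 : A * (-lam * ∑ p, ∑ q, (M p q * dd α β δ p * b q
        + M p q * c β δ p * (-lam * ∑ s, ∑ t, M s t * c α q s * b t)))
      = (∑ p, ∑ q, -(lam * (M p q * dd α β δ p * b q) * A))
        + ∑ p, ∑ q, ∑ s, ∑ t, lam * lam * (M p q * M s t * c β δ p * c α q s * b t) * A := by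
    simp only [Finset.mul_sum, Finset.sum_mul, mul_add, add_mul, Finset.sum_add_distrib]
    refine congrArg₂ (· + ·) ?_ ?_
    · exact sum2_congr fun p q => by ring1
    · exact sum4_congr fun p q s t => by ring1
  have h2 : (lam * ∑ p, ∑ q, M p q * c β δ p * a q) * b α
      = ∑ p, ∑ q, lam * (M p q * c β δ p) * (a q * b α) := by
    simp only [Finset.mul_sum, Finset.sum_mul]
    exact sum2_congr fun p q => by ring
  have h3 : (lam * ∑ p, ∑ q, M p q * c α δ p * a q) * b β
      = ∑ p, ∑ q, lam * (M p q * c α δ p) * (a q * b β) := by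
    simp only [Finset.mul_sum, Finset.sum_mul]
    exact sum2_congr fun p q => by ring
  have h4 : a δ * (-lam * ∑ p, ∑ q, M p q * c α β p * b q)
      = ∑ p, ∑ q, -(lam * (M p q * c α β p) * (a δ * b q)) := by
    simp only [Finset.mul_sum, Finset.sum_mul]
    exact sum2_congr fun p q => by ring
  have h5 : (lam * ∑ p, ∑ q, M p q * c α β p * a q) * b δ
      = ∑ p, ∑ q, lam * (M p q * c α β p) * (a q * b δ) := by
    simp only [Finset.mul_sum, Finset.sum_mul]
    exact sum2_congr fun p q => by ring
  have h6 : a β * (-lam * ∑ p, ∑ q, M p q * c α δ p * b q)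
      = ∑ p, ∑ q, -(lam * (M p q * c α δ p) * (a β * b q)) := by
    simp only [Finset.mul_sum, Finset.sum_mul]
    exact sum2_congr fun p q => by ring
  have h7 : a α * (-lam * ∑ p, ∑ q, M p q * c β δ p * b q)
      = ∑ p, ∑ q, -(lam * (M p q * c β δ p) * (a α * b q)) := by
    simp only [Finset.mul_sum, Finset.sum_mul]
    exact sum2_congr fun p q => by ring
  have g1 : (lam * ∑ s, ∑ t, M s t * dd α β δ s * (a t * B - A * b t))
      = (∑ p, ∑ q, lam * (M p q * dd α β δ p * a q) * B)
        + ∑ p, ∑ q, -(lam * (M p q * dd α β δ p * b q) * A) := by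
    simp only [Finset.mul_sum, ← Finset.sum_add_distrib, sub_eq_add_neg]
    exact sum2_congr fun p q => by ring1
  have g2 : (lam ^ 2 * ∑ p, ∑ q, ∑ s, ∑ t,
          M p q * M s t * c β δ p * c α q s * (a t * B + A * b t))
      = (∑ p, ∑ q, ∑ s, ∑ t, lam * lam * (M p q * M s t * c β δ p * c α q s * a t) * B)
        + ∑ p, ∑ q, ∑ s, ∑ t, lam * lam * (M p q * M s t * c β δ p * c α q s * b t) * A := by
    simp only [Finset.mul_sum, Finset.sum_mul, mul_add, add_mul, Finset.sum_add_distrib]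
    refine congrArg₂ (· + ·) ?_ ?_
    · exact sum4_congr fun p q s t => by ring1
    · exact sum4_congr fun p q s t => by ring1
  have g3 : (lam * ∑ s, ∑ t, M s t * (c β δ s * (a t * b α - a α * b t)
          + c α δ s * (a t * b β - a β * b t) + c α β s * (a t * b δ - a δ * b t)))
      = ((∑ p, ∑ q, lam * (M p q * c β δ p) * (a q * b α))
          + ∑ p, ∑ q, -(lam * (M p q * c β δ p) * (a α * b q)))
        + ((∑ p, ∑ q, lam * (M p q * c α δ p) * (a q * b β))
          + ∑ p, ∑ q, -(lam * (M p q * c α δ p) * (a β * b q)))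
        + ((∑ p, ∑ q, lam * (M p q * c α β p) * (a q * b δ))
          + ∑ p, ∑ q, -(lam * (M p q * c α β p) * (a δ * b q))) := by
    simp only [Finset.mul_sum, ← Finset.sum_add_distrib]
    exact sum2_congr fun s t => by ring
  rw [h1, h2, h3, h4, h5, h6, h7, h8, g1, g2, g3]
  ring

end Tsplitsec

section KeyAlg

lemma key_alg (M : Fin n → Fin n → ℝ) (c : Fin n → Fin n → Fin n → ℝ)
    (dd : Fin n → Fin n → Fin n → Fin n → ℝ) (a b : Fin n → ℝ) (A B lam : ℝ)
    (hM : ∀ i j, M i j = M j i)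
    (hc1 : ∀ i j k, c i j k = c j i k)
    (hc2 : ∀ i j k, c i j k = c i k j)
    (hW : ∀ α β ν ρ, ∑ δ, ∑ γ, c α β δ * M δ γ * c γ ν ρ
      = ∑ δ, ∑ γ, c α ν δ * M δ γ * c γ β ρ)
    (hdW : ∀ s α β ν ρ, ∑ δ, ∑ γ,
        (dd α β δ s * M δ γ * c γ ν ρ + c α β δ * M δ γ * dd γ ν ρ s)
      = ∑ δ, ∑ γ, (dd α ν δ s * M δ γ * c γ β ρ + c α ν δ * M δ γ * dd γ β ρ s))
    (α β ν ρ : Fin n) :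
    (∑ δ, ∑ γ, ((lam * ∑ p, ∑ q, (M p q * dd α β δ p * a q
        + M p q * c β δ p * (lam * ∑ s, ∑ t, M s t * c α q s * a t))) * B
      + (lam * ∑ p, ∑ q, M p q * c β δ p * a q) * b α
      + (lam * ∑ p, ∑ q, M p q * c α δ p * a q) * b β
      + a δ * (-lam * ∑ p, ∑ q, M p q * c α β p * b q)
      + (lam * ∑ p, ∑ q, M p q * c α β p * a q) * b δ
      + a β * (-lam * ∑ p, ∑ q, M p q * c α δ p * b q)
      + a α * (-lam * ∑ p, ∑ q, M p q * c β δ p * b q)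
      + A * (-lam * ∑ p, ∑ q, (M p q * dd α β δ p * b q
        + M p q * c β δ p * (-lam * ∑ s, ∑ t, M s t * c α q s * b t)))) * M δ γ * c γ ν ρ)
      + (∑ δ, ∑ γ, c α β δ * M δ γ * ((lam * ∑ p, ∑ q, (M p q * dd γ ν ρ p * a q
        + M p q * c ν ρ p * (lam * ∑ s, ∑ t, M s t * c γ q s * a t))) * B
      + (lam * ∑ p, ∑ q, M p q * c ν ρ p * a q) * b γ
      + (lam * ∑ p, ∑ q, M p q * c γ ρ p * a q) * b ν
      + a ρ * (-lam * ∑ p, ∑ q, M p q * c γ ν p * b q)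
      + (lam * ∑ p, ∑ q, M p q * c γ ν p * a q) * b ρ
      + a ν * (-lam * ∑ p, ∑ q, M p q * c γ ρ p * b q)
      + a γ * (-lam * ∑ p, ∑ q, M p q * c ν ρ p * b q)
      + A * (-lam * ∑ p, ∑ q, (M p q * dd γ ν ρ p * b q
        + M p q * c ν ρ p * (-lam * ∑ s, ∑ t, M s t * c γ q s * b t)))))
    = (∑ δ, ∑ γ, ((lam * ∑ p, ∑ q, (M p q * dd α ν δ p * a q
        + M p q * c ν δ p * (lam * ∑ s, ∑ t, M s t * c α q s * a t))) * B
      + (lam * ∑ p, ∑ q, M p q * c ν δ p * a q) * b α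
      + (lam * ∑ p, ∑ q, M p q * c α δ p * a q) * b ν
      + a δ * (-lam * ∑ p, ∑ q, M p q * c α ν p * b q)
      + (lam * ∑ p, ∑ q, M p q * c α ν p * a q) * b δ
      + a ν * (-lam * ∑ p, ∑ q, M p q * c α δ p * b q)
      + a α * (-lam * ∑ p, ∑ q, M p q * c ν δ p * b q)
      + A * (-lam * ∑ p, ∑ q, (M p q * dd α ν δ p * b q
        + M p q * c ν δ p * (-lam * ∑ s, ∑ t, M s t * c α q s * b t)))) * M δ γ * c γ β ρ)
      + (∑ δ, ∑ γ, c α ν δ * M δ γ * ((lam * ∑ p, ∑ q, (M p q * dd γ β ρ p * a q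
        + M p q * c β ρ p * (lam * ∑ s, ∑ t, M s t * c γ q s * a t))) * B
      + (lam * ∑ p, ∑ q, M p q * c β ρ p * a q) * b γ
      + (lam * ∑ p, ∑ q, M p q * c γ ρ p * a q) * b β
      + a ρ * (-lam * ∑ p, ∑ q, M p q * c γ β p * b q)
      + (lam * ∑ p, ∑ q, M p q * c γ β p * a q) * b ρ
      + a β * (-lam * ∑ p, ∑ q, M p q * c γ ρ p * b q)
      + a γ * (-lam * ∑ p, ∑ q, M p q * c β ρ p * b q)
      + A * (-lam * ∑ p, ∑ q, (M p q * dd γ β ρ p * b q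
        + M p q * c β ρ p * (-lam * ∑ s, ∑ t, M s t * c γ q s * b t))))) := by
  have split := Tsplit M c dd a b A B lam
  simp only [split]
  have dL1 : (∑ δ, ∑ γ, ((lam * ∑ s, ∑ t, M s t * dd α β δ s * (a t * B - A * b t)) + (lam ^ 2 * ∑ p, ∑ q, ∑ s, ∑ t, M p q * M s t * c β δ p * c α q s * (a t * B + A * b t)) + (lam * ∑ s, ∑ t, M s t * (c β δ s * (a t * b α - a α * b t)
        + c α δ s * (a t * b β - a β * b t) + c α β s * (a t * b δ - a δ * b t)))) * M δ γ * c γ ν ρ)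
      = (∑ δ, ∑ γ, (lam * ∑ s, ∑ t, M s t * dd α β δ s * (a t * B - A * b t)) * M δ γ * c γ ν ρ)
        + (∑ δ, ∑ γ, (lam ^ 2 * ∑ p, ∑ q, ∑ s, ∑ t, M p q * M s t * c β δ p * c α q s * (a t * B + A * b t)) * M δ γ * c γ ν ρ)
        + (∑ δ, ∑ γ, (lam * ∑ s, ∑ t, M s t * (c β δ s * (a t * b α - a α * b t)
        + c α δ s * (a t * b β - a β * b t) + c α β s * (a t * b δ - a δ * b t))) * M δ γ * c γ ν ρ) := by
    calc (∑ δ, ∑ γ, ((lam * ∑ s, ∑ t, M s t * dd α β δ s * (a t * B - A * b t)) + (lam ^ 2 * ∑ p, ∑ q, ∑ s, ∑ t, M p q * M s t * c β δ p * c α q s * (a t * B + A * b t)) + (lam * ∑ s, ∑ t, M s t * (c β δ s * (a t * b α - a α * b t)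
        + c α δ s * (a t * b β - a β * b t) + c α β s * (a t * b δ - a δ * b t)))) * M δ γ * c γ ν ρ)
        = ∑ δ, ∑ γ, ((lam * ∑ s, ∑ t, M s t * dd α β δ s * (a t * B - A * b t)) * M δ γ * c γ ν ρ
            + (lam ^ 2 * ∑ p, ∑ q, ∑ s, ∑ t, M p q * M s t * c β δ p * c α q s * (a t * B + A * b t)) * M δ γ * c γ ν ρ
            + (lam * ∑ s, ∑ t, M s t * (c β δ s * (a t * b α - a α * b t)
        + c α δ s * (a t * b β - a β * b t) + c α β s * (a t * b δ - a δ * b t))) * M δ γ * c γ ν ρ) := sum2_congr fun δ γ => by ring1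
      _ = _ := by simp only [Finset.sum_add_distrib]

  have dR1 : (∑ δ, ∑ γ, c α β δ * M δ γ * ((lam * ∑ s, ∑ t, M s t * dd γ ν ρ s * (a t * B - A * b t)) + (lam ^ 2 * ∑ p, ∑ q, ∑ s, ∑ t, M p q * M s t * c ν ρ p * c γ q s * (a t * B + A * b t)) + (lam * ∑ s, ∑ t, M s t * (c ν ρ s * (a t * b γ - a γ * b t)
        + c γ ρ s * (a t * b ν - a ν * b t) + c γ ν s * (a t * b ρ - a ρ * b t)))))
      = (∑ δ, ∑ γ, c α β δ * M δ γ * (lam * ∑ s, ∑ t, M s t * dd γ ν ρ s * (a t * B - A * b t)))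
        + (∑ δ, ∑ γ, c α β δ * M δ γ * (lam ^ 2 * ∑ p, ∑ q, ∑ s, ∑ t, M p q * M s t * c ν ρ p * c γ q s * (a t * B + A * b t)))
        + (∑ δ, ∑ γ, c α β δ * M δ γ * (lam * ∑ s, ∑ t, M s t * (c ν ρ s * (a t * b γ - a γ * b t)
        + c γ ρ s * (a t * b ν - a ν * b t) + c γ ν s * (a t * b ρ - a ρ * b t)))) := by
    calc (∑ δ, ∑ γ, c α β δ * M δ γ * ((lam * ∑ s, ∑ t, M s t * dd γ ν ρ s * (a t * B - A * b t)) + (lam ^ 2 * ∑ p, ∑ q, ∑ s, ∑ t, M p q * M s t * c ν ρ p * c γ q s * (a t * B + A * b t)) + (lam * ∑ s, ∑ t, M s t * (c ν ρ s * (a t * b γ - a γ * b t)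
        + c γ ρ s * (a t * b ν - a ν * b t) + c γ ν s * (a t * b ρ - a ρ * b t)))))
        = ∑ δ, ∑ γ, (c α β δ * M δ γ * (lam * ∑ s, ∑ t, M s t * dd γ ν ρ s * (a t * B - A * b t))
            + c α β δ * M δ γ * (lam ^ 2 * ∑ p, ∑ q, ∑ s, ∑ t, M p q * M s t * c ν ρ p * c γ q s * (a t * B + A * b t))
            + c α β δ * M δ γ * (lam * ∑ s, ∑ t, M s t * (c ν ρ s * (a t * b γ - a γ * b t)
        + c γ ρ s * (a t * b ν - a ν * b t) + c γ ν s * (a t * b ρ - a ρ * b t)))) := sum2_congr fun δ γ => by ring1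
      _ = _ := by simp only [Finset.sum_add_distrib]

  have dL2 : (∑ δ, ∑ γ, ((lam * ∑ s, ∑ t, M s t * dd α ν δ s * (a t * B - A * b t)) + (lam ^ 2 * ∑ p, ∑ q, ∑ s, ∑ t, M p q * M s t * c ν δ p * c α q s * (a t * B + A * b t)) + (lam * ∑ s, ∑ t, M s t * (c ν δ s * (a t * b α - a α * b t)
        + c α δ s * (a t * b ν - a ν * b t) + c α ν s * (a t * b δ - a δ * b t)))) * M δ γ * c γ β ρ)
      = (∑ δ, ∑ γ, (lam * ∑ s, ∑ t, M s t * dd α ν δ s * (a t * B - A * b t)) * M δ γ * c γ β ρ)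
        + (∑ δ, ∑ γ, (lam ^ 2 * ∑ p, ∑ q, ∑ s, ∑ t, M p q * M s t * c ν δ p * c α q s * (a t * B + A * b t)) * M δ γ * c γ β ρ)
        + (∑ δ, ∑ γ, (lam * ∑ s, ∑ t, M s t * (c ν δ s * (a t * b α - a α * b t)
        + c α δ s * (a t * b ν - a ν * b t) + c α ν s * (a t * b δ - a δ * b t))) * M δ γ * c γ β ρ) := by
    calc (∑ δ, ∑ γ, ((lam * ∑ s, ∑ t, M s t * dd α ν δ s * (a t * B - A * b t)) + (lam ^ 2 * ∑ p, ∑ q, ∑ s, ∑ t, M p q * M s t * c ν δ p * c α q s * (a t * B + A * b t)) + (lam * ∑ s, ∑ t, M s t * (c ν δ s * (a t * b α - a α * b t)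
        + c α δ s * (a t * b ν - a ν * b t) + c α ν s * (a t * b δ - a δ * b t)))) * M δ γ * c γ β ρ)
        = ∑ δ, ∑ γ, ((lam * ∑ s, ∑ t, M s t * dd α ν δ s * (a t * B - A * b t)) * M δ γ * c γ β ρ
            + (lam ^ 2 * ∑ p, ∑ q, ∑ s, ∑ t, M p q * M s t * c ν δ p * c α q s * (a t * B + A * b t)) * M δ γ * c γ β ρ
            + (lam * ∑ s, ∑ t, M s t * (c ν δ s * (a t * b α - a α * b t)
        + c α δ s * (a t * b ν - a ν * b t) + c α ν s * (a t * b δ - a δ * b t))) * M δ γ * c γ β ρ) := sum2_congr fun δ γ => by ring1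
      _ = _ := by simp only [Finset.sum_add_distrib]

  have dR2 : (∑ δ, ∑ γ, c α ν δ * M δ γ * ((lam * ∑ s, ∑ t, M s t * dd γ β ρ s * (a t * B - A * b t)) + (lam ^ 2 * ∑ p, ∑ q, ∑ s, ∑ t, M p q * M s t * c β ρ p * c γ q s * (a t * B + A * b t)) + (lam * ∑ s, ∑ t, M s t * (c β ρ s * (a t * b γ - a γ * b t)
        + c γ ρ s * (a t * b β - a β * b t) + c γ β s * (a t * b ρ - a ρ * b t)))))
      = (∑ δ, ∑ γ, c α ν δ * M δ γ * (lam * ∑ s, ∑ t, M s t * dd γ β ρ s * (a t * B - A * b t)))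
        + (∑ δ, ∑ γ, c α ν δ * M δ γ * (lam ^ 2 * ∑ p, ∑ q, ∑ s, ∑ t, M p q * M s t * c β ρ p * c γ q s * (a t * B + A * b t)))
        + (∑ δ, ∑ γ, c α ν δ * M δ γ * (lam * ∑ s, ∑ t, M s t * (c β ρ s * (a t * b γ - a γ * b t)
        + c γ ρ s * (a t * b β - a β * b t) + c γ β s * (a t * b ρ - a ρ * b t)))) := by
    calc (∑ δ, ∑ γ, c α ν δ * M δ γ * ((lam * ∑ s, ∑ t, M s t * dd γ β ρ s * (a t * B - A * b t)) + (lam ^ 2 * ∑ p, ∑ q, ∑ s, ∑ t, M p q * M s t * c β ρ p * c γ q s * (a t * B + A * b t)) + (lam * ∑ s, ∑ t, M s t * (c β ρ s * (a t * b γ - a γ * b t)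
        + c γ ρ s * (a t * b β - a β * b t) + c γ β s * (a t * b ρ - a ρ * b t)))))
        = ∑ δ, ∑ γ, (c α ν δ * M δ γ * (lam * ∑ s, ∑ t, M s t * dd γ β ρ s * (a t * B - A * b t))
            + c α ν δ * M δ γ * (lam ^ 2 * ∑ p, ∑ q, ∑ s, ∑ t, M p q * M s t * c β ρ p * c γ q s * (a t * B + A * b t))
            + c α ν δ * M δ γ * (lam * ∑ s, ∑ t, M s t * (c β ρ s * (a t * b γ - a γ * b t)
        + c γ ρ s * (a t * b β - a β * b t) + c γ β s * (a t * b ρ - a ρ * b t)))) := sum2_congr fun δ γ => by ring1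
      _ = _ := by simp only [Finset.sum_add_distrib]

  rw [dL1, dR1, dL2, dR2]
  have e1 := S1 (M := M) (c := c) (d := dd) (u := fun t => a t * B - A * b t)
    (lam := lam) hdW α β ν ρ
  have e2 := S2 (M := M) (c := c) (v := fun t => a t * B + A * b t) (lam := lam)
    hM hc1 hc2 hW α β ν ρ
  have e3 := S3 (M := M) (c := c) (w := fun i j => a i * b j - a j * b i) (lam := lam)
    hM hc1 hc2 hW (fun i j => by ring) α β ν ρ
  linear_combination e1 + e2 + e3

end KeyAlg


lemma pd_wdvv {n : ℕ} {η : Matrix (Fin n) (Fin n) ℝ} {F : (Fin n → ℝ) → ℝ}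
    (hF : ContDiff ℝ (⊤ : ℕ∞) F)
    (hWDVV : ∀ α β ν ρ, ∀ x : Fin n → ℝ,
      ∑ δ, ∑ γ, pd α (pd β (pd δ F)) x * η δ γ * pd γ (pd ν (pd ρ F)) x
        = ∑ δ, ∑ γ, pd α (pd ν (pd δ F)) x * η δ γ * pd γ (pd β (pd ρ F)) x)
    (s a b u v : Fin n) (x : Fin n → ℝ) :
    ∑ δ, ∑ γ, (pd a (pd b (pd δ (pd s F))) x * η δ γ * pd γ (pd u (pd v F)) x
        + pd a (pd b (pd δ F)) x * η δ γ * pd γ (pd u (pd v (pd s F))) x)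
      = ∑ δ, ∑ γ, (pd a (pd u (pd δ (pd s F))) x * η δ γ * pd γ (pd b (pd v F)) x
        + pd a (pd u (pd δ F)) x * η δ γ * pd γ (pd b (pd v (pd s F))) x) := by
  have key : ∀ a b u v : Fin n,
      pd s (fun y => ∑ δ, ∑ γ,
          pd a (pd b (pd δ F)) y * η δ γ * pd γ (pd u (pd v F)) y) x
        = ∑ δ, ∑ γ, (pd a (pd b (pd δ (pd s F))) x * η δ γ * pd γ (pd u (pd v F)) x
            + pd a (pd b (pd δ F)) x * η δ γ * pd γ (pd u (pd v (pd s F))) x) := by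
    intro a b u v
    have hterm : ∀ δ γ : Fin n, ContDiff ℝ (⊤ : ℕ∞)
        (fun y => pd a (pd b (pd δ F)) y * η δ γ * pd γ (pd u (pd v F)) y) :=
      fun δ γ => ((contDiff_pd a (contDiff_pd b (contDiff_pd δ hF))).mul
        contDiff_const).mul (contDiff_pd γ (contDiff_pd u (contDiff_pd v hF)))
    rw [pd_sum s Finset.univ x
      (fun δ _ => cd_dAt (ContDiff.sum fun γ _ => hterm δ γ) x)]
    refine Finset.sum_congr rfl fun δ _ => ?_
    rw [pd_sum s Finset.univ x (fun γ _ => cd_dAt (hterm δ γ) x)]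
    refine Finset.sum_congr rfl fun γ _ => ?_
    rw [pd_mul s x
        (cd_dAt ((contDiff_pd a (contDiff_pd b (contDiff_pd δ hF))).mul
          contDiff_const) x)
        (cd_dAt (contDiff_pd γ (contDiff_pd u (contDiff_pd v hF))) x),
      pd_mul_const s x (cd_dAt (contDiff_pd a (contDiff_pd b (contDiff_pd δ hF))) x)
        (η δ γ),
      c_move hF s a b δ x, c_move hF s γ u v x]
  have hfun := funext (hWDVV a b u v)
  have h2 := congrArg (fun φ : (Fin n → ℝ) → ℝ => pd s φ x) hfun
  beta_reduce at h2
  rw [key a b u v, key a u b v] at h2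
  exact h2

/-- the product `χ₊ · χ₋` of Gauss–Manin solutions with opposite
parameters `λ` and `−λ` is a symmetry characteristic of the associativity equations. -/
theorem gauss_manin_product_is_symmetry_of_wdvv
    {n : ℕ} (hn : 1 ≤ n)
    (η : Matrix (Fin n) (Fin n) ℝ)
    (hηsymm : ∀ α β, η α β = η β α)
    (hηinv : IsUnit η.det)
    (F χp χm : (Fin n → ℝ) → ℝ) (lam : ℝ)
    (hF : ContDiff ℝ (⊤ : ℕ∞) F)
    (hχp : ContDiff ℝ (⊤ : ℕ∞) χp)
    (hχm : ContDiff ℝ (⊤ : ℕ∞) χm)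
    (hWDVV : ∀ α β ν ρ, ∀ x : Fin n → ℝ,
      ∑ δ, ∑ γ, pd α (pd β (pd δ F)) x * η δ γ * pd γ (pd ν (pd ρ F)) x
        = ∑ δ, ∑ γ, pd α (pd ν (pd δ F)) x * η δ γ * pd γ (pd β (pd ρ F)) x)
    (hGMp : ∀ α γ, ∀ x : Fin n → ℝ,
      pd α (pd γ χp) x
        = lam * ∑ ρ, ∑ ν, η ρ ν * pd α (pd γ (pd ρ F)) x * pd ν χp x)
    (hGMm : ∀ α γ, ∀ x : Fin n → ℝ,
      pd α (pd γ χm) x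
        = (-lam) * ∑ ρ, ∑ ν, η ρ ν * pd α (pd γ (pd ρ F)) x * pd ν χm x) :
    ∀ α β ν ρ, ∀ x : Fin n → ℝ,
      (∑ δ, ∑ γ, pd α (pd β (pd δ (fun y => χp y * χm y))) x * η δ γ
          * pd γ (pd ν (pd ρ F)) x)
        + (∑ δ, ∑ γ, pd α (pd β (pd δ F)) x * η δ γ
          * pd γ (pd ν (pd ρ (fun y => χp y * χm y))) x)
      = (∑ δ, ∑ γ, pd α (pd ν (pd δ (fun y => χp y * χm y))) x * η δ γ
          * pd γ (pd β (pd ρ F)) x)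
        + (∑ δ, ∑ γ, pd α (pd ν (pd δ F)) x * η δ γ
          * pd γ (pd β (pd ρ (fun y => χp y * χm y))) x) := by
  intro α β ν ρ x
  have hc1 : ∀ i j k : Fin n, pd i (pd j (pd k F)) x = pd j (pd i (pd k F)) x :=
    fun i j k => pd_comm i j (contDiff_pd k hF) x
  have hc2 : ∀ i j k : Fin n, pd i (pd j (pd k F)) x = pd i (pd k (pd j F)) x := by
    intro i j k
    have h : pd j (pd k F) = pd k (pd j F) := funext fun y => pd_comm j k hF y
    rw [h]
  have hW : ∀ a b u v : Fin n,
      ∑ δ, ∑ γ, pd a (pd b (pd δ F)) x * η δ γ * pd γ (pd u (pd v F)) x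
        = ∑ δ, ∑ γ, pd a (pd u (pd δ F)) x * η δ γ * pd γ (pd b (pd v F)) x :=
    fun a b u v => hWDVV a b u v x
  have hdW : ∀ s a b u v : Fin n,
      ∑ δ, ∑ γ, (pd a (pd b (pd δ (pd s F))) x * η δ γ * pd γ (pd u (pd v F)) x
          + pd a (pd b (pd δ F)) x * η δ γ * pd γ (pd u (pd v (pd s F))) x)
        = ∑ δ, ∑ γ, (pd a (pd u (pd δ (pd s F))) x * η δ γ * pd γ (pd b (pd v F)) x
          + pd a (pd u (pd δ F)) x * η δ γ * pd γ (pd b (pd v (pd s F))) x) :=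
    fun s a b u v => pd_wdvv hF hWDVV s a b u v x
  have hT : ∀ i j k : Fin n,
      pd i (pd j (pd k (fun y => χp y * χm y))) x
        = ((lam * ∑ p, ∑ q, (η p q * pd i (pd j (pd k (pd p F))) x * pd q χp x
        + η p q * pd j (pd k (pd p F)) x * (lam * ∑ s, ∑ t, η s t * pd i (pd q (pd s F)) x * pd t χp x))) * χm x
      + (lam * ∑ p, ∑ q, η p q * pd j (pd k (pd p F)) x * pd q χp x) * pd i χm x
      + (lam * ∑ p, ∑ q, η p q * pd i (pd k (pd p F)) x * pd q χp x) * pd j χm x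
      + pd k χp x * (-lam * ∑ p, ∑ q, η p q * pd i (pd j (pd p F)) x * pd q χm x)
      + (lam * ∑ p, ∑ q, η p q * pd i (pd j (pd p F)) x * pd q χp x) * pd k χm x
      + pd j χp x * (-lam * ∑ p, ∑ q, η p q * pd i (pd k (pd p F)) x * pd q χm x)
      + pd i χp x * (-lam * ∑ p, ∑ q, η p q * pd j (pd k (pd p F)) x * pd q χm x)
      + χp x * (-lam * ∑ p, ∑ q, (η p q * pd i (pd j (pd k (pd p F))) x * pd q χm x
        + η p q * pd j (pd k (pd p F)) x * (-lam * ∑ s, ∑ t, η s t * pd i (pd q (pd s F)) x * pd t χm x)))) := by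
    intro i j k
    rw [D3_mul hχp hχm i j k x, GM3 hF hχp hGMp i j k x, GM3 hF hχm hGMm i j k x,
      hGMp j k x, hGMp i k x, hGMp i j x, hGMm i j x, hGMm i k x, hGMm j k x]
  simp only [hT]
  exact key_alg (fun i j => η i j) (fun i j k => pd i (pd j (pd k F)) x)
    (fun i j k l => pd i (pd j (pd k (pd l F))) x)
    (fun q => pd q χp x) (fun q => pd q χm x) (χp x) (χm x) lam
    hηsymm hc1 hc2 hW hdW α β ν ρ
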